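/- The left ideal 𝓘 = Q_𝓕·ε satisfies 𝓘 = K[t,t⁻¹]·ε. Moreover 𝓘_{≤0} = {0}, and for every integer d ≥ 1, 𝓘_{≤d} = {Σ_{i=0}^{d−1} x_i·tⁱ·ε : x_0, …, x_{d−1} ∈ Q} = {Σ_{z=−d}^{d−1} y_z·t^z·ε : y_{−d}, …, y_{d−1} ∈ K}. -/

import Mathlib

open scoped TensorProduct

/-- `f` is a Laurent polynomial: a finite sum `Σ y_z · t^z` with `y_z ∈ K`. -/
def IsLaurent {K : Type} [Field K] (f : RatFunc K) : Prop :=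
  ∃ c : ℤ →₀ K, f = c.sum fun z y => algebraMap K (RatFunc K) y * RatFunc.X ^ z

/-- `X ∈ Q_F` can be written as `Σ x_z · t^z` with `x_z ∈ Q` and `|z| ≤ n`
(i.e. `X ∈ Q_𝓕` and `deg X ≤ n`; `deg 0 = -∞`). -/
def QDegLE {K Q QF : Type} [Field K] [Ring Q] [Ring QF]
    (φ' : Q →+* QF) (ψ : RatFunc K →+* QF) (X : QF) (n : ℕ) : Prop :=
  ∃ c : ℤ →₀ Q, (∀ z : ℤ, c z ≠ 0 → |z| ≤ (n : ℤ)) ∧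
    X = c.sum fun z x => φ' x * ψ (RatFunc.X ^ z)

/-- `X ∈ Q_F` lies in `Q_𝓕`, i.e. it is a finite sum `Σ x_z · t^z` with `x_z ∈ Q`. -/
def InQLaurent {K Q QF : Type} [Field K] [Ring Q] [Ring QF]
    (φ' : Q →+* QF) (ψ : RatFunc K →+* QF) (X : QF) : Prop :=
  ∃ c : ℤ →₀ Q, X = c.sum fun z x => φ' x * ψ (RatFunc.X ^ z)

/-!
Everything reduces to monomials. From `j t^z = b^z t^(-z) j` one gets `j ε = b t⁻¹ ε`, hence
`(a + c j) t^z ε = a t^z ε + c b^(z+1) t^(-z-1) ε`: every element of `Q_𝓕 ε` is a `K`-Laurent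
polynomial times `ε`. Conversely `y t^z ε = y t^z + (y b^z j) t^(-z-1)` has nonzero
`Q`-coefficients exactly at `z` and `-z-1`. The `Q`-Laurent expansion in `Q_F` is unique (because
`Q_F = K(t) ⊕ K(t) j` and the powers of `t` are `K`-linearly independent), so `deg (f ε) ≤ d`
iff every exponent `z` of `f` satisfies `|z| ≤ d` and `|-z-1| ≤ d`, i.e. `-d ≤ z < d`. Pairing
the exponents `i` and `-i-1` back into one `Q`-coefficient gives the description by `x_i ∈ Q`.
-/

namespace CrossedProductLaurent

open RatFunc (X)

variable {K : Type} [Field K]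

theorem linearIndependent_X_zpow : LinearIndependent K fun z : ℤ => (X : RatFunc K) ^ z := by
  rw [linearIndependent_iff']
  intro s g hsum z₀ hz₀
  obtain ⟨N, hN⟩ : ∃ N : ℕ, ∀ z ∈ s, 0 ≤ z + N :=
    ⟨s.sup fun z => (-z).toNat, fun z hz => by
      have := Finset.le_sup (f := fun z => (-z).toNat) hz
      omega⟩
  set P : Polynomial K := ∑ z ∈ s, Polynomial.monomial (z + N).toNat (g z)
  have hP :
      algebraMap (Polynomial K) (RatFunc K) P = (∑ z ∈ s, g z • X ^ z) * X ^ (N : ℤ) := by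
    simp only [P, map_sum, Finset.sum_mul]
    refine Finset.sum_congr rfl fun z hz => ?_
    rw [← Polynomial.C_mul_X_pow_eq_monomial, map_mul, RatFunc.algebraMap_C, map_pow,
      RatFunc.algebraMap_X, ← zpow_natCast, Int.toNat_of_nonneg (hN z hz),
      zpow_add₀ RatFunc.X_ne_zero, Algebra.smul_def, mul_assoc, RatFunc.algebraMap_eq_C]
  have hP0 : P = 0 := RatFunc.algebraMap_injective K (by rw [hP, hsum, zero_mul, map_zero])
  have := congrArg (Polynomial.coeff · (z₀ + N).toNat) hP0
  simp only [P, Polynomial.finsetSum_coeff, Polynomial.coeff_monomial,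
    Polynomial.coeff_zero] at this
  rwa [Finset.sum_eq_single_of_mem z₀ hz₀ fun z hz hne => if_neg (by
    have := hN z hz; have := hN z₀ hz₀; omega), if_pos rfl] at this

noncomputable def laurentSum : (ℤ →₀ K) →ₗ[K] RatFunc K :=
  Finsupp.linearCombination K fun z => X ^ z

local notation "C" => algebraMap K (RatFunc K)

theorem laurentSum_apply (c : ℤ →₀ K) : laurentSum c = c.sum fun z y => C y * X ^ z := by
  simp only [laurentSum, Finsupp.linearCombination_apply, Algebra.smul_def]

theorem laurentSum_single (z : ℤ) (y : K) : laurentSum (Finsupp.single z y) = C y * X ^ z := by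
  simp [laurentSum, Algebra.smul_def]

theorem exists_support_subset_range_iff {α ι R M : Type*} [Fintype ι] [AddCommMonoid R]
    [AddCommMonoid M] (F : (α →₀ R) →+ M) {e : ι → α} (he : Function.Injective e)
    (m : M) :
    (∃ c : α →₀ R, ↑c.support ⊆ Set.range e ∧ m = F c) ↔
      ∃ y : ι → R, m = ∑ i, F (Finsupp.single (e i) (y i)) := by
  classical
  constructor
  · rintro ⟨c, hc, rfl⟩
    refine ⟨c ∘ e, ?_⟩
    have hsub : c.support ⊆ Finset.univ.map ⟨e, he⟩ := fun z hz => by simpa using hc hz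
    conv_lhs => rw [← Finsupp.sum_single c, Finsupp.sum_of_support_subset c hsub _ (by simp)]
    simp
  · rintro ⟨y, rfl⟩
    refine ⟨∑ i, Finsupp.single (e i) (y i), ?_, by rw [map_sum]⟩
    intro z hz
    obtain ⟨i, -, hi⟩ := Finset.mem_biUnion.mp (Finsupp.support_finsetSum hz)
    exact ⟨i, (Finset.mem_singleton.mp (Finsupp.support_single_subset hi)).symm⟩

theorem range_natCast_sub (d : ℕ) :
    Set.range (fun i : Fin (2 * d) => ((i : ℕ) : ℤ) - d) = Set.Ico (-(d : ℤ)) d := by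
  ext z
  simp only [Set.mem_range, Set.mem_Ico]
  constructor
  · rintro ⟨i, rfl⟩
    have := i.isLt
    omega
  · rintro ⟨h₁, h₂⟩
    exact ⟨⟨(z + d).toNat, by omega⟩, by simp only; omega⟩

def pairedExponent (d : ℕ) : Fin d ⊕ Fin d → ℤ :=
  Sum.elim (fun i => (i : ℕ)) fun i => -((i : ℕ) : ℤ) - 1

theorem pairedExponent_injective (d : ℕ) : Function.Injective (pairedExponent d) :=
  Function.Injective.sumElim (fun i i' h => Fin.ext (by simpa using h))
    (fun i i' h => Fin.ext (by simpa using h)) fun i i' => by omega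

theorem range_pairedExponent (d : ℕ) : Set.range (pairedExponent d) = Set.Ico (-(d : ℤ)) d := by
  rw [pairedExponent, Set.Sum.elim_range]
  ext z
  simp only [Set.mem_union, Set.mem_range, Set.mem_Ico]
  constructor
  · rintro (⟨i, rfl⟩ | ⟨i, rfl⟩) <;> · have := i.isLt; omega
  · rintro ⟨h₁, h₂⟩
    rcases le_or_gt 0 z with hz | hz
    · exact Or.inl ⟨⟨z.toNat, by omega⟩, by simp only; omega⟩
    · exact Or.inr ⟨⟨(-z - 1).toNat, by omega⟩, by simp only; omega⟩

variable {QF Q : Type} [Ring QF] [Ring Q] {φ : K →+* Q} {j : Q} {φ' : Q →+* QF}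
  {ψ : RatFunc K →+* QF} {J : QF} {β : K} {ε : QF}

def SkewCommutesWithX (ψ : RatFunc K →+* QF) (J : QF) (β : K) : Prop :=
  ∀ z : ℤ, J * ψ (X ^ z) = ψ (C (β ^ z) * X ^ (-z)) * J

theorem skewCommutesWithX_of_mul_eq (σ : RatFunc K →+* RatFunc K)
    (hJσ : ∀ f, J * ψ f = ψ (σ f) * J) (hσX : σ X = C β * X⁻¹) :
    SkewCommutesWithX ψ J β := by
  intro z
  rw [hJσ, map_zpow₀, hσX, mul_zpow, inv_zpow', map_zpow₀]

theorem J_mul_X_inv (hJX : SkewCommutesWithX ψ J β) : J * ψ X⁻¹ = ψ (C β⁻¹ * X) * J := by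
  simpa using hJX (-1)

theorem J_mul_eps (hJX : SkewCommutesWithX ψ J β) (hβ : β ≠ 0) (hJ2 : J * J = ψ (C β))
    (hε : ε = 1 + J * ψ X⁻¹) : J * ε = ψ (C β * X⁻¹) * ε := by
  have hcancel : C β * X⁻¹ * (C β⁻¹ * X) = 1 := by
    rw [mul_mul_mul_comm, ← map_mul, mul_inv_cancel₀ hβ, inv_mul_cancel₀ RatFunc.X_ne_zero,
      map_one, one_mul]
  rw [hε, mul_add, mul_add, mul_one, mul_one, ← mul_assoc, hJ2, ← map_mul, J_mul_X_inv hJX,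
    ← mul_assoc, ← map_mul, hcancel, map_one, one_mul, add_comm]

theorem map_mul_X_zpow (hφ'K : ∀ x, φ' (φ x) = ψ (C x)) (y : K) (z : ℤ) :
    φ' (φ y) * ψ (X ^ z) = ψ (C y * X ^ z) := by
  rw [hφ'K, map_mul]

theorem map_mul_j_mul_X_zpow (hJX : SkewCommutesWithX ψ J β)
    (hφ'K : ∀ x, φ' (φ x) = ψ (C x)) (hφ'j : φ' j = J) (y : K) (z : ℤ) :
    φ' (φ y * j) * ψ (X ^ z) = ψ (C (y * β ^ z) * X ^ (-z)) * J := by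
  rw [map_mul, hφ'K, hφ'j, mul_assoc, hJX, ← mul_assoc, ← map_mul, map_mul C, mul_assoc]

theorem map_mul_X_zpow_mul_eps (hJX : SkewCommutesWithX ψ J β) (hβ : β ≠ 0)
    (hJ2 : J * J = ψ (C β)) (hε : ε = 1 + J * ψ X⁻¹) (hφ'K : ∀ x, φ' (φ x) = ψ (C x))
    (hφ'j : φ' j = J) (a c : K) (z : ℤ) :
    φ' (φ a + φ c * j) * ψ (X ^ z) * ε =
      ψ (C a * X ^ z) * ε + ψ (C (c * β ^ (z + 1)) * X ^ (-z - 1)) * ε := by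
  rw [map_add, add_mul, add_mul, map_mul_X_zpow hφ'K, map_mul_j_mul_X_zpow hJX hφ'K hφ'j,
    mul_assoc, J_mul_eps hJX hβ hJ2 hε, ← mul_assoc, ← map_mul]
  congr 3
  rw [zpow_add_one₀ hβ, zpow_sub_one₀ RatFunc.X_ne_zero]
  simp only [map_mul C]
  ring

theorem map_monomial_mul_eps (hJX : SkewCommutesWithX ψ J β) (hβ : β ≠ 0)
    (hε : ε = 1 + J * ψ X⁻¹) (hφ'K : ∀ x, φ' (φ x) = ψ (C x)) (hφ'j : φ' j = J)
    (y : K) (z : ℤ) :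
    ψ (C y * X ^ z) * ε =
      φ' (φ y) * ψ (X ^ z) + φ' (φ (y * β ^ z) * j) * ψ (X ^ (-z - 1)) := by
  rw [map_mul_X_zpow hφ'K, map_mul_j_mul_X_zpow hJX hφ'K hφ'j, hε, mul_add, mul_one,
    ← mul_assoc, mul_assoc, J_mul_X_inv hJX, ← mul_assoc, ← map_mul]
  congr 3
  rw [mul_assoc y, ← zpow_add₀ hβ, show z + (-z - 1) = -1 by ring,
    show -(-z - 1) = z + 1 by ring, zpow_add_one₀ RatFunc.X_ne_zero, zpow_neg_one]
  simp only [map_mul C]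
  ring

variable (φ' ψ) in
noncomputable def qLaurentSum : (ℤ →₀ Q) →+ QF :=
  Finsupp.liftAddHom fun z => (AddMonoidHom.mulRight (ψ (X ^ z))).comp φ'.toAddMonoidHom

theorem qLaurentSum_apply (c : ℤ →₀ Q) :
    qLaurentSum φ' ψ c = c.sum fun z x => φ' x * ψ (X ^ z) :=
  rfl

theorem qLaurentSum_single (z : ℤ) (x : Q) :
    qLaurentSum φ' ψ (Finsupp.single z x) = φ' x * ψ (X ^ z) := by
  simp [qLaurentSum]

theorem qLaurentSum_mapRange (hφ'K : ∀ x, φ' (φ x) = ψ (C x)) (c : ℤ →₀ K) :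
    qLaurentSum φ' ψ (c.mapRange φ φ.map_zero) = ψ (laurentSum c) := by
  induction c using Finsupp.induction_linear with
  | zero => simp
  | add c₁ c₂ h₁ h₂ =>
    rw [Finsupp.mapRange_add (map_add φ), map_add, h₁, h₂, map_add, map_add]
  | single z y =>
    rw [Finsupp.mapRange_single, qLaurentSum_single, laurentSum_single, map_mul_X_zpow hφ'K]

theorem qLaurentSum_injective (hJX : SkewCommutesWithX ψ J β) (hβ : β ≠ 0)
    (hφ'K : ∀ x, φ' (φ x) = ψ (C x)) (hφ'j : φ' j = J)
    (hQspan : ∀ q : Q, ∃ a c : K, q = φ a + φ c * j)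
    (hQFindep : ∀ f g : RatFunc K, ψ f + ψ g * J = 0 → f = 0 ∧ g = 0) :
    Function.Injective (qLaurentSum φ' ψ) := by
  rw [injective_iff_map_eq_zero]
  intro cq hcq
  choose a c hac using fun z => hQspan (cq z)
  have hsplit : qLaurentSum φ' ψ cq = ψ (∑ z ∈ cq.support, a z • X ^ z) +
      ψ (∑ z ∈ cq.support, (c z * β ^ z) • X ^ (-z)) * J := by
    rw [qLaurentSum_apply, Finsupp.sum, map_sum, map_sum, Finset.sum_mul,
      ← Finset.sum_add_distrib]
    refine Finset.sum_congr rfl fun z _ => ?_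
    rw [hac z, map_add, add_mul, map_mul_X_zpow hφ'K, map_mul_j_mul_X_zpow hJX hφ'K hφ'j,
      Algebra.smul_def, Algebra.smul_def]
  obtain ⟨ha, hc⟩ := hQFindep _ _ (hsplit ▸ hcq)
  ext z
  by_cases hz : z ∈ cq.support
  · have ha := linearIndependent_iff'.mp linearIndependent_X_zpow _ _ ha z hz
    have hc := linearIndependent_iff'.mp (linearIndependent_X_zpow.comp _ neg_injective) _ _ hc z hz
    rw [hac z, ha, (mul_eq_zero.mp hc).resolve_right (zpow_ne_zero z hβ)]
    simp
  · exact Finsupp.notMem_support_iff.mp hz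

theorem qDegLE_qLaurentSum_iff (hinj : Function.Injective (qLaurentSum φ' ψ)) (cq : ℤ →₀ Q)
    (n : ℕ) : QDegLE φ' ψ (qLaurentSum φ' ψ cq) n ↔ ∀ z, cq z ≠ 0 → |z| ≤ n := by
  constructor
  · rintro ⟨cq', hcq', h⟩
    rwa [hinj h]
  · exact fun h => ⟨cq, h, rfl⟩

variable (φ j β) in
/-- The `Q`-Laurent coefficients of `ψ (laurentSum c) * ε`, by `qLaurentSum_epsExpansion`. -/
noncomputable def epsExpansion : (ℤ →₀ K) →+ (ℤ →₀ Q) :=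
  Finsupp.liftAddHom fun z => AddMonoidHom.mk'
    (fun y => Finsupp.single z (φ y) + Finsupp.single (-z - 1) (φ (y * β ^ z) * j))
    fun y₁ y₂ => by simp only [add_mul, map_add, Finsupp.single_add]; abel

theorem epsExpansion_single (z : ℤ) (y : K) :
    epsExpansion φ j β (Finsupp.single z y) =
      Finsupp.single z (φ y) + Finsupp.single (-z - 1) (φ (y * β ^ z) * j) := by
  simp [epsExpansion]

theorem epsExpansion_apply (c : ℤ →₀ K) (w : ℤ) :
    epsExpansion φ j β c w = φ (c w) + φ (c (-w - 1) * β ^ (-w - 1)) * j := by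
  induction c using Finsupp.induction_linear with
  | zero => simp
  | add c₁ c₂ h₁ h₂ =>
    simp only [map_add, Finsupp.add_apply, h₁, h₂, add_mul]
    abel
  | single z y =>
    rw [epsExpansion_single, Finsupp.add_apply]
    rcases eq_or_ne z w with rfl | h₁
    · simp [show -z - 1 ≠ z by omega, show z ≠ -z - 1 by omega]
    · rcases eq_or_ne z (-w - 1) with rfl | h₂
      · simp [h₁]
      · simp [h₁, h₂, show -z - 1 ≠ w by omega]

theorem epsExpansion_apply_eq_zero_iff (hβ : β ≠ 0)
    (hQindep : ∀ a c : K, φ a + φ c * j = 0 → a = 0 ∧ c = 0) (c : ℤ →₀ K) (w : ℤ) :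
    epsExpansion φ j β c w = 0 ↔ c w = 0 ∧ c (-w - 1) = 0 := by
  rw [epsExpansion_apply]
  constructor
  · intro h
    obtain ⟨h₁, h₂⟩ := hQindep _ _ h
    exact ⟨h₁, (mul_eq_zero.mp h₂).resolve_right (zpow_ne_zero _ hβ)⟩
  · rintro ⟨h₁, h₂⟩
    simp [h₁, h₂]

theorem qLaurentSum_epsExpansion (hJX : SkewCommutesWithX ψ J β) (hβ : β ≠ 0)
    (hε : ε = 1 + J * ψ X⁻¹) (hφ'K : ∀ x, φ' (φ x) = ψ (C x)) (hφ'j : φ' j = J)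
    (c : ℤ →₀ K) : qLaurentSum φ' ψ (epsExpansion φ j β c) = ψ (laurentSum c) * ε := by
  induction c using Finsupp.induction_linear with
  | zero => simp
  | add c₁ c₂ h₁ h₂ => rw [map_add, map_add, h₁, h₂, map_add, map_add, add_mul]
  | single z y =>
    rw [epsExpansion_single, map_add, qLaurentSum_single, qLaurentSum_single, laurentSum_single,
      map_monomial_mul_eps hJX hβ hε hφ'K hφ'j]

variable (φ' ψ) in
def epsLeftIdeal (ε : QF) : Set QF :=
  {ξ | ∃ Y, InQLaurent φ' ψ Y ∧ ξ = Y * ε}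

theorem exists_laurentSum_mul_eps (hJX : SkewCommutesWithX ψ J β) (hβ : β ≠ 0)
    (hJ2 : J * J = ψ (C β)) (hε : ε = 1 + J * ψ X⁻¹) (hφ'K : ∀ x, φ' (φ x) = ψ (C x))
    (hφ'j : φ' j = J) (hQspan : ∀ q : Q, ∃ a c : K, q = φ a + φ c * j) (cq : ℤ →₀ Q) :
    ∃ c : ℤ →₀ K, qLaurentSum φ' ψ cq * ε = ψ (laurentSum c) * ε := by
  induction cq using Finsupp.induction_linear with
  | zero => exact ⟨0, by simp⟩
  | add cq₁ cq₂ h₁ h₂ =>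
    obtain ⟨c₁, h₁⟩ := h₁
    obtain ⟨c₂, h₂⟩ := h₂
    exact ⟨c₁ + c₂, by rw [map_add, add_mul, h₁, h₂, map_add, map_add, add_mul]⟩
  | single z q =>
    obtain ⟨a, c, rfl⟩ := hQspan q
    refine ⟨Finsupp.single z a + Finsupp.single (-z - 1) (c * β ^ (z + 1)), ?_⟩
    rw [qLaurentSum_single, map_mul_X_zpow_mul_eps hJX hβ hJ2 hε hφ'K hφ'j, map_add,
      laurentSum_single, laurentSum_single, map_add, add_mul]

theorem mem_epsLeftIdeal_iff (hJX : SkewCommutesWithX ψ J β) (hβ : β ≠ 0)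
    (hJ2 : J * J = ψ (C β)) (hε : ε = 1 + J * ψ X⁻¹) (hφ'K : ∀ x, φ' (φ x) = ψ (C x))
    (hφ'j : φ' j = J) (hQspan : ∀ q : Q, ∃ a c : K, q = φ a + φ c * j) (ξ : QF) :
    ξ ∈ epsLeftIdeal φ' ψ ε ↔ ∃ c : ℤ →₀ K, ξ = ψ (laurentSum c) * ε := by
  constructor
  · rintro ⟨_, ⟨cq, rfl⟩, rfl⟩
    exact exists_laurentSum_mul_eps hJX hβ hJ2 hε hφ'K hφ'j hQspan cq
  · rintro ⟨c, rfl⟩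
    exact ⟨_, ⟨c.mapRange φ φ.map_zero, (qLaurentSum_mapRange hφ'K c).symm⟩, rfl⟩

theorem mem_epsLeftIdeal_and_qDegLE_iff (hJX : SkewCommutesWithX ψ J β) (hβ : β ≠ 0)
    (hJ2 : J * J = ψ (C β)) (hε : ε = 1 + J * ψ X⁻¹) (hφ'K : ∀ x, φ' (φ x) = ψ (C x))
    (hφ'j : φ' j = J) (hQspan : ∀ q : Q, ∃ a c : K, q = φ a + φ c * j)
    (hQindep : ∀ a c : K, φ a + φ c * j = 0 → a = 0 ∧ c = 0)
    (hQFindep : ∀ f g : RatFunc K, ψ f + ψ g * J = 0 → f = 0 ∧ g = 0) (d : ℕ) (ξ : QF) :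
    ξ ∈ epsLeftIdeal φ' ψ ε ∧ QDegLE φ' ψ ξ d ↔
      ∃ c : ℤ →₀ K, ↑c.support ⊆ Set.Ico (-(d : ℤ)) d ∧
        ξ = ψ (laurentSum c) * ε := by
  have hinj := qLaurentSum_injective hJX hβ hφ'K hφ'j hQspan hQFindep
  have hdeg (c : ℤ →₀ K) : QDegLE φ' ψ (ψ (laurentSum c) * ε) d ↔
      ∀ w, ¬(c w = 0 ∧ c (-w - 1) = 0) → |w| ≤ d := by
    rw [← qLaurentSum_epsExpansion hJX hβ hε hφ'K hφ'j, qDegLE_qLaurentSum_iff hinj]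
    exact forall_congr' fun w => by rw [Ne, epsExpansion_apply_eq_zero_iff hβ hQindep]
  rw [mem_epsLeftIdeal_iff hJX hβ hJ2 hε hφ'K hφ'j hQspan]
  constructor
  · rintro ⟨⟨c, rfl⟩, hcd⟩
    refine ⟨c, fun z hz => ?_, rfl⟩
    have hz : c z ≠ 0 := Finsupp.mem_support_iff.mp hz
    have h₁ := (hdeg c).mp hcd z (fun h => hz h.1)
    have h₂ := (hdeg c).mp hcd (-z - 1) (fun h => hz (by simpa using h.2))
    rw [abs_le] at h₁ h₂
    exact ⟨by omega, by omega⟩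
  · rintro ⟨c, hc, rfl⟩
    refine ⟨⟨c, rfl⟩, (hdeg c).mpr fun w hw => ?_⟩
    have hIco (z : ℤ) (hz : c z ≠ 0) : -(d : ℤ) ≤ z ∧ z < d :=
      hc (Finsupp.mem_support_iff.mpr hz)
    rw [not_and_or] at hw
    rw [abs_le]
    rcases hw with hw | hw
    · have := hIco _ hw
      omega
    · have := hIco _ hw
      omega

theorem exists_support_subset_range_iff_sum {ι : Type*} [Fintype ι] {e : ι → ℤ}
    (he : Function.Injective e) (ξ : QF) :
    (∃ c : ℤ →₀ K, ↑c.support ⊆ Set.range e ∧ ξ = ψ (laurentSum c) * ε) ↔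
      ∃ y : ι → K, ξ = ∑ i, ψ (C (y i) * X ^ e i) * ε := by
  have key := exists_support_subset_range_iff
    ((AddMonoidHom.mulRight ε).comp (ψ.toAddMonoidHom.comp laurentSum.toAddMonoidHom)) he ξ
  simpa only [AddMonoidHom.coe_comp, AddMonoidHom.coe_mulRight, RingHom.toAddMonoidHom_eq_coe,
    AddMonoidHom.coe_coe, LinearMap.toAddMonoidHom_coe, Function.comp_apply,
    laurentSum_single] using key

theorem mem_epsLeftIdeal_and_qDegLE_iff_sum_K (hJX : SkewCommutesWithX ψ J β) (hβ : β ≠ 0)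
    (hJ2 : J * J = ψ (C β)) (hε : ε = 1 + J * ψ X⁻¹) (hφ'K : ∀ x, φ' (φ x) = ψ (C x))
    (hφ'j : φ' j = J) (hQspan : ∀ q : Q, ∃ a c : K, q = φ a + φ c * j)
    (hQindep : ∀ a c : K, φ a + φ c * j = 0 → a = 0 ∧ c = 0)
    (hQFindep : ∀ f g : RatFunc K, ψ f + ψ g * J = 0 → f = 0 ∧ g = 0) (d : ℕ) (ξ : QF) :
    ξ ∈ epsLeftIdeal φ' ψ ε ∧ QDegLE φ' ψ ξ d ↔
      ∃ y : Fin (2 * d) → K, ξ = ∑ i : Fin (2 * d),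
        ψ (C (y i) * X ^ (((i : ℕ) : ℤ) - (d : ℤ))) * ε := by
  rw [mem_epsLeftIdeal_and_qDegLE_iff hJX hβ hJ2 hε hφ'K hφ'j hQspan hQindep hQFindep,
    ← range_natCast_sub]
  exact exists_support_subset_range_iff_sum (fun i i' h => Fin.ext (by simpa using h)) ξ

theorem exists_sum_Q_mul_eps_iff (hJX : SkewCommutesWithX ψ J β) (hβ : β ≠ 0)
    (hJ2 : J * J = ψ (C β)) (hε : ε = 1 + J * ψ X⁻¹) (hφ'K : ∀ x, φ' (φ x) = ψ (C x))
    (hφ'j : φ' j = J) (hQspan : ∀ q : Q, ∃ a c : K, q = φ a + φ c * j) (d : ℕ) (ξ : QF) :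
    (∃ x : Fin d → Q, ξ = ∑ i : Fin d, φ' (x i) * ψ (X ^ (i : ℕ)) * ε) ↔
      ∃ y : Fin d ⊕ Fin d → K, ξ = ∑ s, ψ (C (y s) * X ^ pairedExponent d s) * ε := by
  have hterm (i : Fin d) (a c : K) : φ' (φ a + φ c * j) * ψ (X ^ (i : ℕ)) * ε =
      ψ (C a * X ^ ((i : ℕ) : ℤ)) * ε +
        ψ (C (c * β ^ ((i : ℕ) + 1 : ℤ)) * X ^ (-((i : ℕ) : ℤ) - 1)) * ε := by
    rw [← zpow_natCast, map_mul_X_zpow_mul_eps hJX hβ hJ2 hε hφ'K hφ'j]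
  simp only [Fintype.sum_sum_type, pairedExponent, Sum.elim_inl, Sum.elim_inr,
    ← Finset.sum_add_distrib]
  constructor
  · rintro ⟨x, rfl⟩
    choose a c hac using fun i => hQspan (x i)
    refine ⟨Sum.elim a fun i => c i * β ^ ((i : ℕ) + 1 : ℤ),
      Finset.sum_congr rfl fun i _ => ?_⟩
    rw [hac i, hterm, Sum.elim_inl, Sum.elim_inr]
  · rintro ⟨y, rfl⟩
    refine ⟨fun i => φ (y (.inl i)) + φ (y (.inr i) * β ^ (-((i : ℕ) + 1 : ℤ))) * j,
      Finset.sum_congr rfl fun i _ => ?_⟩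
    rw [hterm, mul_assoc, ← zpow_add₀ hβ, neg_add_cancel, zpow_zero, mul_one]

theorem mem_epsLeftIdeal_and_qDegLE_iff_sum_Q (hJX : SkewCommutesWithX ψ J β) (hβ : β ≠ 0)
    (hJ2 : J * J = ψ (C β)) (hε : ε = 1 + J * ψ X⁻¹) (hφ'K : ∀ x, φ' (φ x) = ψ (C x))
    (hφ'j : φ' j = J) (hQspan : ∀ q : Q, ∃ a c : K, q = φ a + φ c * j)
    (hQindep : ∀ a c : K, φ a + φ c * j = 0 → a = 0 ∧ c = 0)
    (hQFindep : ∀ f g : RatFunc K, ψ f + ψ g * J = 0 → f = 0 ∧ g = 0) (d : ℕ) (ξ : QF) :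
    ξ ∈ epsLeftIdeal φ' ψ ε ∧ QDegLE φ' ψ ξ d ↔
      ∃ x : Fin d → Q, ξ = ∑ i : Fin d, φ' (x i) * ψ (X ^ (i : ℕ)) * ε := by
  rw [mem_epsLeftIdeal_and_qDegLE_iff hJX hβ hJ2 hε hφ'K hφ'j hQspan hQindep hQFindep,
    ← range_pairedExponent, exists_support_subset_range_iff_sum (pairedExponent_injective d),
    exists_sum_Q_mul_eps_iff hJX hβ hJ2 hε hφ'K hφ'j hQspan]

end CrossedProductLaurent

open CrossedProductLaurent in
theorem ideal_II_and_degree_filtration_general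
    -- k is a field, K/k a degree-2 Galois extension with nontrivial automorphism ι,
    -- b a nonzero element of k
    (k K : Type) [Field k] [Field K] [Algebra k K]
    (b : k) (hb : b ≠ 0)
    -- Q = (K, ι, b) is the crossed-product quaternion k-algebra, a division ring,
    -- containing K via φ, with j·j = b, j·x = ι(x)·j, and Q = K ⊕ K·j
    (Q : Type) [DivisionRing Q] [Algebra k Q]
    (φ : K →ₐ[k] Q) (j : Q)
    (hQdec : ∀ q : Q, ∃! p : K × K, q = φ p.1 + φ p.2 * j)
    -- σ is the automorphism of K(t) acting as ι on K with σ(t) = b·t⁻¹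
    (σ : RatFunc K ≃+* RatFunc K)
    (hσt : σ RatFunc.X = algebraMap K (RatFunc K) (algebraMap k K b) * RatFunc.X⁻¹)
    -- Q_F = Q ⊗_k F, identified with K(t) ⊕ K(t)·j : it contains K(t) via ψ and an
    -- element J (the image of j) with J·J = b, J·ψ(f) = ψ(σ f)·J, Q_F = ψ(K(t)) ⊕ ψ(K(t))·J,
    -- and Q embeds via φ' compatibly with φ and j
    (QF : Type) [Ring QF]
    (ψ : RatFunc K →+* QF) (J : QF)
    (hJ2 : J * J = ψ (algebraMap K (RatFunc K) (algebraMap k K b)))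
    (hJf : ∀ f : RatFunc K, J * ψ f = ψ (σ f) * J)
    (hQFdec : ∀ q : QF, ∃! p : RatFunc K × RatFunc K, q = ψ p.1 + ψ p.2 * J)
    (φ' : Q →+* QF)
    (hφ'K : ∀ x : K, φ' (φ x) = ψ (algebraMap K (RatFunc K) x))
    (hφ'j : φ' j = J)
    -- ε = 1 + j·t⁻¹
    (ε : QF) (hε : ε = 1 + J * ψ RatFunc.X⁻¹) :
    -- 𝓘 = Q_𝓕·ε equals K[t,t⁻¹]·ε
    (∀ X : QF, (∃ Y : QF, InQLaurent φ' ψ Y ∧ X = Y * ε) ↔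
      ∃ f : RatFunc K, IsLaurent f ∧ X = ψ f * ε) ∧
    -- 𝓘_{≤0} = {0}
    (∀ X : QF, ((∃ Y : QF, InQLaurent φ' ψ Y ∧ X = Y * ε) ∧ QDegLE φ' ψ X 0) ↔ X = 0) ∧
    -- for d ≥ 1, the two descriptions of 𝓘_{≤d}
    (∀ d : ℕ, 1 ≤ d → ∀ X : QF,
      (((∃ Y : QF, InQLaurent φ' ψ Y ∧ X = Y * ε) ∧ QDegLE φ' ψ X d) ↔
        ∃ x : Fin d → Q, X = ∑ i : Fin d, φ' (x i) * ψ (RatFunc.X ^ (i : ℕ)) * ε) ∧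
      (((∃ Y : QF, InQLaurent φ' ψ Y ∧ X = Y * ε) ∧ QDegLE φ' ψ X d) ↔
        ∃ y : Fin (2 * d) → K, X = ∑ i : Fin (2 * d),
          ψ (algebraMap K (RatFunc K) (y i) * RatFunc.X ^ (((i : ℕ) : ℤ) - (d : ℤ))) * ε)) := by
  have hβ : algebraMap k K b ≠ 0 := (map_ne_zero _).mpr hb
  have hJX := skewCommutesWithX_of_mul_eq σ.toRingHom hJf hσt
  have hQspan (q : Q) : ∃ a c : K, q = φ a + φ c * j :=
    let ⟨p, hp, _⟩ := hQdec q
    ⟨p.1, p.2, hp⟩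
  have hQindep (a c : K) (h : φ a + φ c * j = 0) : a = 0 ∧ c = 0 :=
    Prod.ext_iff.mp ((hQdec 0).unique (y₁ := (a, c)) (y₂ := 0) h.symm (by simp))
  have hQFindep (f g : RatFunc K) (h : ψ f + ψ g * J = 0) : f = 0 ∧ g = 0 :=
    Prod.ext_iff.mp ((hQFdec 0).unique (y₁ := (f, g)) (y₂ := 0) h.symm (by simp))
  have sum_K := mem_epsLeftIdeal_and_qDegLE_iff_sum_K (φ := φ.toRingHom) hJX hβ hJ2 hε hφ'K
    hφ'j hQspan hQindep hQFindep
  have sum_Q := mem_epsLeftIdeal_and_qDegLE_iff_sum_Q (φ := φ.toRingHom) hJX hβ hJ2 hε hφ'K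
    hφ'j hQspan hQindep hQFindep
  refine ⟨fun ξ => ?_, fun ξ => (sum_K 0 ξ).trans (by simp),
    fun d _ ξ => ⟨sum_Q d ξ, sum_K d ξ⟩⟩
  refine (mem_epsLeftIdeal_iff (φ := φ.toRingHom) hJX hβ hJ2 hε hφ'K hφ'j hQspan ξ).trans
    ⟨fun ⟨c, h⟩ => ⟨_, ⟨c, laurentSum_apply c⟩, h⟩,
      fun ⟨f, ⟨c, hf⟩, h⟩ => ⟨c, ?_⟩⟩
  rw [h, hf, laurentSum_apply]

theorem ideal_II_and_degree_filtration
    -- k is a field, K/k a degree-2 Galois extension with nontrivial automorphism ι,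
    -- b a nonzero element of k
    (k K : Type) [Field k] [Field K] [Algebra k K]
    (hrank : Module.finrank k K = 2)
    (ι : K ≃ₐ[k] K) (hι : ∃ x : K, ι x ≠ x)
    (hι2 : ∀ x : K, ι (ι x) = x)
    (hfix : ∀ x : K, ι x = x → ∃ c : k, algebraMap k K c = x)
    (b : k) (hb : b ≠ 0)
    -- Q = (K, ι, b) is the crossed-product quaternion k-algebra, a division ring,
    -- containing K via φ, with j·j = b, j·x = ι(x)·j, and Q = K ⊕ K·j
    (Q : Type) [DivisionRing Q] [Algebra k Q]
    (φ : K →ₐ[k] Q) (j : Q)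
    (hj2 : j * j = algebraMap k Q b)
    (hjx : ∀ x : K, j * φ x = φ (ι x) * j)
    (hQdec : ∀ q : Q, ∃! p : K × K, q = φ p.1 + φ p.2 * j)
    -- σ is the automorphism of K(t) acting as ι on K with σ(t) = b·t⁻¹
    (σ : RatFunc K ≃+* RatFunc K)
    (hσK : ∀ x : K, σ (algebraMap K (RatFunc K) x) = algebraMap K (RatFunc K) (ι x))
    (hσt : σ RatFunc.X = algebraMap K (RatFunc K) (algebraMap k K b) * RatFunc.X⁻¹)
    -- Q_F = Q ⊗_k F, identified with K(t) ⊕ K(t)·j : it contains K(t) via ψ and an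
    -- element J (the image of j) with J·J = b, J·ψ(f) = ψ(σ f)·J, Q_F = ψ(K(t)) ⊕ ψ(K(t))·J,
    -- and Q embeds via φ' compatibly with φ and j
    (QF : Type) [Ring QF]
    (ψ : RatFunc K →+* QF) (J : QF)
    (hJ2 : J * J = ψ (algebraMap K (RatFunc K) (algebraMap k K b)))
    (hJf : ∀ f : RatFunc K, J * ψ f = ψ (σ f) * J)
    (hQFdec : ∀ q : QF, ∃! p : RatFunc K × RatFunc K, q = ψ p.1 + ψ p.2 * J)
    (φ' : Q →+* QF)
    (hφ'K : ∀ x : K, φ' (φ x) = ψ (algebraMap K (RatFunc K) x))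
    (hφ'j : φ' j = J)
    -- ε = 1 + j·t⁻¹
    (ε : QF) (hε : ε = 1 + J * ψ RatFunc.X⁻¹) :
    -- 𝓘 = Q_𝓕·ε equals K[t,t⁻¹]·ε
    (∀ X : QF, (∃ Y : QF, InQLaurent φ' ψ Y ∧ X = Y * ε) ↔
      ∃ f : RatFunc K, IsLaurent f ∧ X = ψ f * ε) ∧
    -- 𝓘_{≤0} = {0}
    (∀ X : QF, ((∃ Y : QF, InQLaurent φ' ψ Y ∧ X = Y * ε) ∧ QDegLE φ' ψ X 0) ↔ X = 0) ∧
    -- for d ≥ 1, the two descriptions of 𝓘_{≤d}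
    (∀ d : ℕ, 1 ≤ d → ∀ X : QF,
      (((∃ Y : QF, InQLaurent φ' ψ Y ∧ X = Y * ε) ∧ QDegLE φ' ψ X d) ↔
        ∃ x : Fin d → Q, X = ∑ i : Fin d, φ' (x i) * ψ (RatFunc.X ^ (i : ℕ)) * ε) ∧
      (((∃ Y : QF, InQLaurent φ' ψ Y ∧ X = Y * ε) ∧ QDegLE φ' ψ X d) ↔
        ∃ y : Fin (2 * d) → K, X = ∑ i : Fin (2 * d),
          ψ (algebraMap K (RatFunc K) (y i) * RatFunc.X ^ (((i : ℕ) : ℤ) - (d : ℤ))) * ε)) :=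
  ideal_II_and_degree_filtration_general k K b hb Q φ j hQdec σ hσt QF ψ J hJ2 hJf hQFdec φ' hφ'K
    hφ'j ε hε
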